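/- arXiv:1401.0214 — 2 statements merged into one kernel-verified Lean document; each statement's English description precedes it below -/
import Mathlib

section
/- Let M_s, M_p be positive natural numbers and let P : Fin M_p → Fin M_s → ℝ satisfy 0 ≤ P j k ≤ 1 for all j, k. Define the stability region of system S as R(S) = { λ : Fin M_s → ℝ | there exists ω : Fin M_p → Fin M_s → ℝ with 0 ≤ ω j k ≤ 1 for all j,k, ∑_{j} ω j k ≤ 1 for every k, ∑_{k} ω j k ≤ 1 for every j, and λ k < ∑_{j} ω j k · P j k for every k }. Define the stability region of system Ŝ as R(Ŝ) = { λ : Fin M_s → ℝ | there exists Γ : Fin M_p → Fin M_s → ℝ with 0 ≤ Γ i k ≤ 1 for all i,k, ∑_{i} Γ i k ≤ 1 for every k, and λ k < ∑_{i} Γ i k · (∏_{v ≠ k} (1 − Γ i v)) · P i k for every k }. Then R(Ŝ) ⊆ R(S). -/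
open Finset

lemma sum_erase_prod_le {ι : Type*} [DecidableEq ι] (s : Finset ι) (x : ι → ℝ)
    :
    (∀ v ∈ s, 0 ≤ x v ∧ x v ≤ 1) →
    (∑ k ∈ s, x k * ∏ v ∈ s.erase k, (1 - x v)) + ∏ v ∈ s, (1 - x v) ≤ 1 := by
  classical
  induction s using Finset.induction_on with
  | empty => intro _; simp
  | @insert a s ha ih =>
    intro hx
    have ha1 : 0 ≤ x a ∧ x a ≤ 1 := hx a (Finset.mem_insert_self a s)
    have hxs : ∀ v ∈ s, 0 ≤ x v ∧ x v ≤ 1 := fun v hv => hx v (Finset.mem_insert_of_mem hv)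
    have hps : 0 ≤ ∏ v ∈ s, (1 - x v) :=
      Finset.prod_nonneg fun v hv => by linarith [(hxs v hv).2]
    rw [Finset.sum_insert ha, Finset.prod_insert ha, Finset.erase_insert ha]
    have hsum : ∑ k ∈ s, x k * ∏ v ∈ (insert a s).erase k, (1 - x v)
        = (1 - x a) * ∑ k ∈ s, x k * ∏ v ∈ s.erase k, (1 - x v) := by
      rw [Finset.mul_sum]
      refine Finset.sum_congr rfl fun k hk => ?_
      have hka : a ≠ k := fun h => ha (h ▸ hk)
      have hae : a ∉ s.erase k := fun h => ha (Finset.mem_of_mem_erase h)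
      rw [Finset.erase_insert_of_ne hka, Finset.prod_insert hae]
      ring
    have hps1 : ∏ v ∈ s, (1 - x v) ≤ 1 :=
      Finset.prod_le_one (fun v hv => by linarith [(hxs v hv).2])
        (fun v hv => by linarith [(hxs v hv).1])
    rw [hsum]
    nlinarith [ih hxs, hps, hps1, ha1.1, ha1.2]

theorem stmt_0 (Ms Mp : ℕ) (hMs : 0 < Ms) (hMp : 0 < Mp)
    (P : Fin Mp → Fin Ms → ℝ)
    (hP : ∀ j k, 0 ≤ P j k ∧ P j k ≤ 1) :
    {lam : Fin Ms → ℝ | ∃ Γ : Fin Mp → Fin Ms → ℝ,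
      (∀ i k, 0 ≤ Γ i k ∧ Γ i k ≤ 1) ∧
      (∀ k, ∑ i, Γ i k ≤ 1) ∧
      (∀ k, lam k < ∑ i, Γ i k * (∏ v ∈ Finset.univ.erase k, (1 - Γ i v)) * P i k)} ⊆
    {lam : Fin Ms → ℝ | ∃ ω : Fin Mp → Fin Ms → ℝ,
      (∀ j k, 0 ≤ ω j k ∧ ω j k ≤ 1) ∧
      (∀ k, ∑ j, ω j k ≤ 1) ∧
      (∀ j, ∑ k, ω j k ≤ 1) ∧
      (∀ k, lam k < ∑ j, ω j k * P j k)} := by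
  rintro lam ⟨Γ, hΓ, hcol, hrate⟩
  refine ⟨fun j k => Γ j k * ∏ v ∈ Finset.univ.erase k, (1 - Γ j v), ?_, ?_, ?_, ?_⟩
  · intro j k
    have hprod0 : 0 ≤ ∏ v ∈ Finset.univ.erase k, (1 - Γ j v) :=
      Finset.prod_nonneg fun v _ => by linarith [(hΓ j v).2]
    have hprod1 : ∏ v ∈ Finset.univ.erase k, (1 - Γ j v) ≤ 1 :=
      Finset.prod_le_one (fun v _ => by linarith [(hΓ j v).2]) (fun v _ => by linarith [(hΓ j v).1])
    exact ⟨mul_nonneg (hΓ j k).1 hprod0,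
      le_trans (mul_le_of_le_one_right (hΓ j k).1 hprod1) (hΓ j k).2⟩
  · intro k
    refine le_trans (Finset.sum_le_sum fun j _ => ?_) (hcol k)
    have hprod1 : ∏ v ∈ Finset.univ.erase k, (1 - Γ j v) ≤ 1 :=
      Finset.prod_le_one (fun v _ => by linarith [(hΓ j v).2]) (fun v _ => by linarith [(hΓ j v).1])
    exact mul_le_of_le_one_right (hΓ j k).1 hprod1
  · intro j
    have h := sum_erase_prod_le Finset.univ (Γ j) (fun v _ => hΓ j v)
    have hp : 0 ≤ ∏ v ∈ (Finset.univ : Finset (Fin Ms)), (1 - Γ j v) :=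
      Finset.prod_nonneg fun v _ => by linarith [(hΓ j v).2]
    linarith
  · intro k
    exact hrate k
end

section
/- Let M_s, M_p be positive natural numbers and let Γ : Fin M_p → Fin M_s → ℝ satisfy 0 ≤ Γ i k ≤ 1 for all i, k and ∑_{i ∈ Fin M_p} Γ i k ≤ 1 for every k. Define g i k = Γ i k · ∏_{v ≠ k} (1 − Γ i v). Then: (i) 0 ≤ g i k ≤ 1 for all i, k; (ii) ∑_{i ∈ Fin M_p} g i k ≤ 1 for every k; and (iii) ∑_{k ∈ Fin M_s} g i k ≤ 1 for every i. -/
open Finset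

lemma aux_exactly_one {α : Type*} [DecidableEq α] (s : Finset α) (x : α → ℝ)
    (hx : ∀ v, 0 ≤ x v ∧ x v ≤ 1) :
    ∑ k ∈ s, x k * ∏ v ∈ s.erase k, (1 - x v) + ∏ v ∈ s, (1 - x v) ≤ 1 := by
  induction s using Finset.induction_on with
  | empty => simp
  | @insert a s ha ih =>
    have hP0 : 0 ≤ ∏ v ∈ s, (1 - x v) := Finset.prod_nonneg fun v _ => by linarith [(hx v).2]
    have hP1 : ∏ v ∈ s, (1 - x v) ≤ 1 :=
      Finset.prod_le_one (fun v _ => by linarith [(hx v).2]) (fun v _ => by linarith [(hx v).1])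
    have h1 : ∑ k ∈ insert a s, x k * ∏ v ∈ (insert a s).erase k, (1 - x v)
        = x a * ∏ v ∈ s, (1 - x v)
          + (1 - x a) * ∑ k ∈ s, x k * ∏ v ∈ s.erase k, (1 - x v) := by
      rw [Finset.sum_insert ha, Finset.erase_insert ha, Finset.mul_sum]
      congr 1
      refine Finset.sum_congr rfl fun k hk => ?_
      have hka : k ≠ a := fun h => ha (h ▸ hk)
      rw [Finset.erase_insert_of_ne hka.symm, Finset.prod_insert (fun h => ha (Finset.erase_subset _ _ h))]
      ring
    rw [h1, Finset.prod_insert ha]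
    have hxa := hx a
    nlinarith [ih]

theorem stmt_6 (Ms Mp : ℕ) (hMs : 0 < Ms) (hMp : 0 < Mp)
    (Γ : Fin Mp → Fin Ms → ℝ)
    (hΓ : ∀ i k, 0 ≤ Γ i k ∧ Γ i k ≤ 1)
    (hsum : ∀ k, ∑ i : Fin Mp, Γ i k ≤ 1)
    (g : Fin Mp → Fin Ms → ℝ)
    (hg : ∀ i k, g i k = Γ i k * ∏ v ∈ Finset.univ.erase k, (1 - Γ i v)) :
    (∀ i k, 0 ≤ g i k ∧ g i k ≤ 1) ∧
    (∀ k, ∑ i : Fin Mp, g i k ≤ 1) ∧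
    (∀ i, ∑ k : Fin Ms, g i k ≤ 1) := by
  have hprod : ∀ i k, 0 ≤ ∏ v ∈ Finset.univ.erase k, (1 - Γ i v) ∧
      ∏ v ∈ Finset.univ.erase k, (1 - Γ i v) ≤ 1 := fun i k =>
    ⟨Finset.prod_nonneg fun v _ => by linarith [(hΓ i v).2],
     Finset.prod_le_one (fun v _ => by linarith [(hΓ i v).2]) (fun v _ => by linarith [(hΓ i v).1])⟩
  have hle : ∀ i k, g i k ≤ Γ i k := fun i k => by
    rw [hg i k]
    nlinarith [(hprod i k).1, (hprod i k).2, (hΓ i k).1]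
  refine ⟨fun i k => ⟨by rw [hg i k]; exact mul_nonneg (hΓ i k).1 (hprod i k).1,
    le_trans (hle i k) (hΓ i k).2⟩, fun k => ?_, fun i => ?_⟩
  · calc ∑ i : Fin Mp, g i k ≤ ∑ i : Fin Mp, Γ i k :=
          Finset.sum_le_sum fun i _ => hle i k
      _ ≤ 1 := hsum k
  · have := aux_exactly_one Finset.univ (Γ i) (hΓ i)
    have hP0 : 0 ≤ ∏ v : Fin Ms, (1 - Γ i v) :=
      Finset.prod_nonneg fun v _ => by linarith [(hΓ i v).2]
    calc ∑ k : Fin Ms, g i k = ∑ k : Fin Ms, Γ i k * ∏ v ∈ Finset.univ.erase k, (1 - Γ i v) :=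
          Finset.sum_congr rfl fun k _ => hg i k
      _ ≤ 1 := by linarith
end
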